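/- With non-zero cardinal utilities (every agent has strictly positive utility for every item), a mechanism for online fair division is envy-free ex ante if and only if it is ex ante equivalent to the Like mechanism; equivalently, envy-freeness ex ante forces every item to be allocated with probability 1/n to each of the n agents. -/
import Mathlib


/-!
Online fair division with additive utilities (Aleksandrov & Walsh).

Agents are `Fin n`, items `Fin m` arriving in index order. A bid/utility
profile is `Bids n m`. An allocation assigns to each item an optional agent
(`none` = discarded). An online mechanism returns, for every instance, a
probability distribution over allocations, where the distribution over the
first `j` items depends only on the bids for the first `j` items.
-/

open Finset
open scoped Classical

noncomputable section

abbrev Bids (n m : ℕ) := Fin n → Fin m → ℝ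
abbrev Alloc (n m : ℕ) := Fin m → Option (Fin n)

/-- An online mechanism for online fair division. -/
structure OnlineMech where
  /-- probability of returning allocation `π` on bids `v` -/
  d : ∀ (n m : ℕ), Bids n m → Alloc n m → ℝ
  nonneg : ∀ n m v π, 0 ≤ d n m v π
  total : ∀ n m v, ∑ π : Alloc n m, d n m v π = 1
  /-- online: the joint distribution of the allocation of items `o_1,…,o_j`
  depends only on the bids for items `o_1,…,o_j`. -/
  online : ∀ (n m : ℕ) (v w : Bids n m) (j : Fin m),
      (∀ (i : Fin n) (k : Fin m), k ≤ j → v i k = w i k) →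
      ∀ σ : Alloc n m,
        ∑ π ∈ univ.filter (fun π : Alloc n m => ∀ k ≤ j, π k = σ k), d n m v π
      = ∑ π ∈ univ.filter (fun π : Alloc n m => ∀ k ≤ j, π k = σ k), d n m w π

/-- Marginal probability that agent `i` receives item `j` under distribution `d`. -/
def genMarg {n m : ℕ} (d : Alloc n m → ℝ) (j : Fin m) (i : Fin n) : ℝ :=
  ∑ π ∈ univ.filter (fun π : Alloc n m => π j = some i), d π

/-- `p_i(Π_j)`: probability agent `i` gets item `j` under mechanism `M` on bids `v`. -/
def marg (M : OnlineMech) {n m : ℕ} (v : Bids n m) (j : Fin m) (i : Fin n) : ℝ :=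
  genMarg (M.d n m v) j i

/-- Non-wasteful: each item is allocated (with probability one in total) only
among agents bidding positively for it, and is discarded iff no one bids
positively for it. -/
def NonWasteful (M : OnlineMech) : Prop :=
  ∀ (n m : ℕ) (v : Bids n m) (π : Alloc n m), 0 < M.d n m v π →
    ∀ j : Fin m,
      ((∀ i, v i j = 0) → π j = none) ∧
      ((∃ i, 0 < v i j) → π j ≠ none) ∧
      (∀ i, π j = some i → 0 < v i j)

/-- Replace agent `i`'s bid for item `j` by `c`. -/
def setBid {n m : ℕ} (v : Bids n m) (i : Fin n) (j : Fin m) (c : ℝ) : Bids n m :=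
  fun a k => if a = i ∧ k = j then c else v a k

/-- Replace agent `i`'s whole bid vector by `b`. -/
def setAgent {n m : ℕ} (v : Bids n m) (i : Fin n) (b : Fin m → ℝ) : Bids n m :=
  fun a => if a = i then b else v a

/-- Strategy-proof: no agent can strictly increase their expected (true) utility by
reporting any sequence of bids other than their sincere utilities, others sincere. -/
def StrategyProof (M : OnlineMech) : Prop :=
  ∀ (n m : ℕ) (u : Bids n m), (∀ i j, 0 ≤ u i j) →
    ∀ (i : Fin n) (b : Fin m → ℝ), (∀ j, 0 ≤ b j) →
      ∑ j, marg M (setAgent u i b) j i * u i j ≤ ∑ j, marg M u j i * u i j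

/-- Step mechanism: an agent's probability for the current item is `0` on a zero
bid and is invariant under the magnitude of a positive bid (all else fixed). -/
def IsStep (M : OnlineMech) : Prop :=
  ∀ (n m : ℕ) (v : Bids n m) (i : Fin n) (j : Fin m),
    (v i j = 0 → marg M v j i = 0) ∧
    (∀ c : ℝ, 0 < c → 0 < v i j → marg M (setBid v i j c) j i = marg M v j i)

/-- Memoryless mechanism: an agent's probability for item `j` does not depend on
that agent's bids for the earlier items `o_1,…,o_{j-1}` (their bid for `j` and
all other agents' bids being fixed). -/
def Memoryless (M : OnlineMech) : Prop :=
  ∀ (n m : ℕ) (v w : Bids n m) (i : Fin n) (j : Fin m),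
    (∀ a, a ≠ i → v a = w a) → (∀ k : Fin m, j ≤ k → v i k = w i k) →
    marg M v j i = marg M w j i

/-- Online strategy-proof: at each round `j`, no agent can strictly increase their
expected utility over the first `j` items by misreporting only the bid for item
`o_j`, having bid sincerely before (others sincere). -/
def OnlineSP (M : OnlineMech) : Prop :=
  ∀ (n m : ℕ) (u : Bids n m), (∀ i j, 0 ≤ u i j) →
    ∀ (i : Fin n) (j : Fin m) (c : ℝ), 0 ≤ c →
      ∑ h ∈ univ.filter (fun h : Fin m => h ≤ j), marg M (setBid u i j c) h i * u i h
      ≤ ∑ h ∈ univ.filter (fun h : Fin m => h ≤ j), marg M u h i * u i h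

/-- Agents bidding positively for item `j`. -/
def likeSet {n m : ℕ} (v : Bids n m) (j : Fin m) : Finset (Fin n) :=
  univ.filter (fun a : Fin n => 0 < v a j)

/-- Probability of agent `i` for item `j` under the Like mechanism: uniform among
positive bidders. -/
def likeProb {n m : ℕ} (v : Bids n m) (j : Fin m) (i : Fin n) : ℝ :=
  if i ∈ likeSet v j then ((likeSet v j).card : ℝ)⁻¹ else 0

/-- Ex ante equivalence to the Like mechanism: on every instance, every agent
receives every item with the same probability as under Like. -/
def ExAnteLike (M : OnlineMech) : Prop :=
  ∀ (n m : ℕ) (u : Bids n m), (∀ i j, 0 ≤ u i j) →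
    ∀ (i : Fin n) (j : Fin m), marg M u j i = likeProb u j i

/-- Envy-free ex ante (sincere bidding). -/
def EFA (M : OnlineMech) : Prop :=
  ∀ (n m : ℕ) (u : Bids n m), (∀ i j, 0 ≤ u i j) →
    ∀ i k : Fin n, ∑ h, marg M u h k * u i h ≤ ∑ h, marg M u h i * u i h

/-- Shared envy-free ex ante: `i`'s expected utility restricted to the items
`k` also likes is at least `i`'s expected utility for `k`'s expected allocation. -/
def SEFA (M : OnlineMech) : Prop :=
  ∀ (n m : ℕ) (u : Bids n m), (∀ i j, 0 ≤ u i j) →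
    ∀ i k : Fin n,
      ∑ h, marg M u h k * u i h
      ≤ ∑ h ∈ univ.filter (fun h : Fin m => 0 < u k h), marg M u h i * u i h

/-- `u_{ik}(π)`: agent `i`'s utility for agent `k`'s bundle in allocation `π`. -/
def util {n m : ℕ} (u : Bids n m) (i k : Fin n) (π : Alloc n m) : ℝ :=
  ∑ j ∈ univ.filter (fun j : Fin m => π j = some k), u i j

/-- Pareto efficiency (ex post) of an allocation. -/
def ParetoEff {n m : ℕ} (u : Bids n m) (π : Alloc n m) : Prop :=
  ¬ ∃ π' : Alloc n m,
      (∀ i, util u i i π ≤ util u i i π') ∧ ∃ i, util u i i π < util u i i π'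

/-- Pareto efficiency ex post of a mechanism (sincere bidding). -/
def PEP (M : OnlineMech) : Prop :=
  ∀ (n m : ℕ) (u : Bids n m), (∀ i j, 0 ≤ u i j) →
    ∀ π : Alloc n m, 0 < M.d n m u π → ParetoEff u π

/-- Ex ante Pareto efficiency of a vector of item-allocation probabilities `f`:
no feasible random assignment `q` gives every agent at least their expected
utility and some agent strictly more. -/
def margPEA {n m : ℕ} (u : Bids n m) (f : Fin m → Fin n → ℝ) : Prop :=
  ¬ ∃ q : Fin n → Fin m → ℝ,
      (∀ i j, 0 ≤ q i j) ∧ (∀ j, ∑ i, q i j ≤ 1) ∧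
      (∀ i, ∑ h, f h i * u i h ≤ ∑ h, q i h * u i h) ∧
      (∃ i, ∑ h, f h i * u i h < ∑ h, q i h * u i h)

/-- Pareto efficiency ex ante of a mechanism (sincere bidding). -/
def PEA (M : OnlineMech) : Prop :=
  ∀ (n m : ℕ) (u : Bids n m), (∀ i j, 0 ≤ u i j) → margPEA u (marg M u)

/-- Envy-freeness ex ante at every prefix of the item sequence. -/
def PrefixEFA (M : OnlineMech) : Prop :=
  ∀ (n m : ℕ) (u : Bids n m), (∀ i j, 0 ≤ u i j) →
    ∀ (j : Fin m) (i k : Fin n),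
      ∑ h ∈ univ.filter (fun h : Fin m => h ≤ j), marg M u h k * u i h
      ≤ ∑ h ∈ univ.filter (fun h : Fin m => h ≤ j), marg M u h i * u i h

/-- The allocation produced by Online Serial Dictator with priority order `σ`
(lower `σ`-value = higher priority): each item goes to the highest-priority
positive bidder, and is discarded if there is none. -/
def osdAlloc {n m : ℕ} (σ : Equiv.Perm (Fin n)) (v : Bids n m) : Alloc n m := fun j =>
  if h : (likeSet v j).Nonempty then
    some (σ.symm (((likeSet v j).image σ).min' (h.image σ))) else none

/-- `i`'s utility for `k`'s bundle restricted to the first `j` items. -/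
def utilUpTo {n m : ℕ} (u : Bids n m) (i k : Fin n) (π : Alloc n m) (j : ℕ) : ℝ :=
  ∑ h ∈ univ.filter (fun h : Fin m => (h : ℕ) < j ∧ π h = some k), u i h

/-- Pareto efficiency of the allocation of the first `j` items. -/
def PEUpTo {n m : ℕ} (u : Bids n m) (π : Alloc n m) (j : ℕ) : Prop :=
  ¬ ∃ π' : Alloc n m,
      (∀ i, utilUpTo u i i π j ≤ utilUpTo u i i π' j) ∧
      ∃ i, utilUpTo u i i π j < utilUpTo u i i π' j

/-- Number of items among `o_1,…,o_{j-1}` held by agent `a` in `π`. -/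
def countBefore {n m : ℕ} (π : Alloc n m) (a : Fin n) (j : Fin m) : ℕ :=
  (univ.filter (fun k : Fin m => k < j ∧ π k = some a)).card

/-- Feasible agents for item `j` under Balanced Like: positive bidders holding
the fewest earlier items among positive bidders. -/
def blFeasSet {n m : ℕ} (u : Bids n m) (π : Alloc n m) (j : Fin m) : Finset (Fin n) :=
  univ.filter (fun a : Fin n =>
    0 < u a j ∧ ∀ b : Fin n, 0 < u b j → countBefore π a j ≤ countBefore π b j)

/-- Probability that Balanced Like returns allocation `π` (product of the
uniform conditional probabilities round by round). -/
def blDist {n m : ℕ} (u : Bids n m) (π : Alloc n m) : ℝ :=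
  ∏ j : Fin m,
    match π j with
    | none => if ∀ i, ¬ 0 < u i j then 1 else 0
    | some i => if i ∈ blFeasSet u π j then ((blFeasSet u π j).card : ℝ)⁻¹ else 0

/-- Probability that the Like mechanism returns allocation `π`. -/
def likeDist {n m : ℕ} (u : Bids n m) (π : Alloc n m) : ℝ :=
  ∏ j : Fin m,
    match π j with
    | none => if ∀ i, ¬ 0 < u i j then 1 else 0
    | some i => if i ∈ likeSet u j then ((likeSet u j).card : ℝ)⁻¹ else 0

/-- Feasible agents for item `j` under Maximum Like: positive bidders with the
maximum bid. -/
def mlFeasSet {n m : ℕ} (u : Bids n m) (j : Fin m) : Finset (Fin n) :=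
  univ.filter (fun a : Fin n => 0 < u a j ∧ ∀ b : Fin n, u b j ≤ u a j)

/-- Probability that Maximum Like returns allocation `π`. -/
def mlDist {n m : ℕ} (u : Bids n m) (π : Alloc n m) : ℝ :=
  ∏ j : Fin m,
    match π j with
    | none => if ∀ i, ¬ 0 < u i j then 1 else 0
    | some i => if i ∈ mlFeasSet u j then ((mlFeasSet u j).card : ℝ)⁻¹ else 0


lemma marg_nonneg (M : OnlineMech) {n m : ℕ} (v : Bids n m) (j : Fin m) (i : Fin n) :
    0 ≤ marg M v j i :=
  Finset.sum_nonneg fun π _ => M.nonneg n m v π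

lemma marg_le_one (M : OnlineMech) {n m : ℕ} (v : Bids n m) (j : Fin m) (i : Fin n) :
    marg M v j i ≤ 1 := by
  calc marg M v j i ≤ ∑ π : Alloc n m, M.d n m v π :=
        Finset.sum_le_sum_of_subset_of_nonneg (filter_subset _ _)
          (fun π _ _ => M.nonneg n m v π)
    _ = 1 := M.total n m v

lemma sum_marg (M : OnlineMech) {n m : ℕ} (v : Bids n m) (j : Fin m)
    (hne : ∀ π : Alloc n m, 0 < M.d n m v π → π j ≠ none) :
    ∑ i : Fin n, marg M v j i = 1 := by
  have h1 : ∀ π : Alloc n m, π j = none → M.d n m v π = 0 := by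
    intro π hπ
    by_contra hd
    exact hne π (lt_of_le_of_ne (M.nonneg n m v π) (Ne.symm hd)) hπ
  have h2 : ∑ i : Fin n, marg M v j i
      = ∑ π : Alloc n m, ∑ i : Fin n, (if π j = some i then M.d n m v π else 0) := by
    rw [Finset.sum_comm]
    exact Finset.sum_congr rfl fun i _ => Finset.sum_filter _ _
  rw [h2, ← M.total n m v]
  refine Finset.sum_congr rfl fun π _ => ?_
  rcases hπ : π j with _ | a
  · simp [hπ, h1 π hπ]
  · simp only [hπ, Option.some.injEq]
    rw [Finset.sum_ite_eq]
    simp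

lemma margPrefix (M : OnlineMech) {n m : ℕ} (v w : Bids n m) (j : Fin m)
    (hagree : ∀ (i : Fin n) (k : Fin m), k ≤ j → v i k = w i k)
    (h : Fin m) (hh : h ≤ j) (i : Fin n) :
    marg M v h i = marg M w h i := by
  have key : ∀ d : Alloc n m → ℝ,
      ∑ π ∈ univ.filter (fun π : Alloc n m => π h = some i), d π
      = ∑ σ : Alloc n m,
          (if (σ h = some i ∧ ∀ k : Fin m, ¬ k ≤ j → σ k = none) then
            (∑ π ∈ univ.filter (fun π : Alloc n m => ∀ k ≤ j, π k = σ k), d π) else 0) := by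
    intro d
    set g : Alloc n m → Alloc n m := fun π k => if k ≤ j then π k else none with hg
    rw [← Finset.sum_fiberwise_of_maps_to
      (t := (univ : Finset (Alloc n m))) (g := g) (fun x _ => Finset.mem_univ _) d]
    refine Finset.sum_congr rfl fun σ _ => ?_
    by_cases hσ : σ h = some i ∧ ∀ k : Fin m, ¬ k ≤ j → σ k = none
    · rw [if_pos hσ]
      refine Finset.sum_congr ?_ fun _ _ => rfl
      rw [Finset.filter_filter]
      refine Finset.filter_congr fun π _ => ?_
      constructor
      · intro ⟨h1, h2⟩ k hk
        rw [← h2]; simp [g, hk]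
      · intro hp
        constructor
        · rw [hp h hh, hσ.1]
        · funext k
          by_cases hk : k ≤ j
          · simp [g, hk, hp k hk]
          · simp [g, hk, hσ.2 k hk]
    · rw [if_neg hσ]
      rw [Finset.filter_filter]
      convert Finset.sum_empty
      rw [Finset.filter_eq_empty_iff]
      intro π _ ⟨h1, h2⟩
      apply hσ
      constructor
      · rw [← h2]; simpa [g, hh] using h1
      · intro k hk; rw [← h2]; simp [g, hk]
  unfold marg genMarg
  rw [key, key]
  refine Finset.sum_congr rfl fun σ _ => ?_
  split_ifs with hσ
  · exact M.online n m v w j hagree σ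
  · rfl

lemma key_marg (M : OnlineMech)
    (halloc : ∀ (n m : ℕ) (v : Bids n m) (π : Alloc n m), 0 < M.d n m v π →
      ∀ j : Fin m, (∃ i, 0 < v i j) → π j ≠ none)
    (efa : ∀ (n m : ℕ) (u : Bids n m), (∀ i j, 0 < u i j) →
        ∀ i k : Fin n, ∑ h, marg M u h k * u i h ≤ ∑ h, marg M u h i * u i h) :
    ∀ (J : ℕ) (n m : ℕ) (u : Bids n m), (∀ i j, 0 < u i j) →
      ∀ j : Fin m, (j : ℕ) = J → ∀ i : Fin n, marg M u j i = 1 / (n : ℝ) := by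
  intro J
  induction J using Nat.strong_induction_on with
  | _ J IH =>
    intro n m u hu j hj i
    -- Step A : pairwise inequalities between margins of item j
    have stepA : ∀ a b : Fin n, marg M u j b ≤ marg M u j a := by
      intro a b
      have hkey : ∀ ε : ℝ, 0 < ε →
          marg M u j b * u a j ≤ marg M u j a * u a j + ε * m := by
        intro ε hε
        set w : Bids n m := fun x k => if k ≤ j then u x k else ε with hw
        have hwpos : ∀ x k, 0 < w x k := by
          intro x k; by_cases hk : k ≤ j <;> simp [w, hk, hu x k, hε]
        have hagree : ∀ (x : Fin n) (k : Fin m), k ≤ j → u x k = w x k := by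
          intro x k hk; simp [w, hk]
        -- margins of earlier items are 1/n by IH; margin at j agrees with u
        have hmargw : ∀ (h : Fin m), h ≤ j → ∀ c : Fin n,
            marg M w h c = if h = j then marg M u j c else 1 / (n : ℝ) := by
          intro h hh c
          by_cases hhj : h = j
          · rw [if_pos hhj, hhj]
            exact (margPrefix M u w j hagree j le_rfl c).symm
          · have hlt : (h : ℕ) < J := by
              rw [← hj]
              exact lt_of_le_of_ne (Fin.le_def.mp hh) (fun hc => hhj (Fin.ext hc))
            rw [if_neg hhj]
            exact IH (h : ℕ) hlt n m w hwpos h rfl c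
        have hEFA := efa n m w hwpos a b
        -- split sums into prefix and tail
        have hsplit : ∀ c : Fin n,
            ∑ h, marg M w h c * w a h
            = (∑ h ∈ univ.filter (fun h : Fin m => h ≤ j), marg M w h c * w a h)
              + ∑ h ∈ univ.filter (fun h : Fin m => ¬ h ≤ j), marg M w h c * w a h := by
          intro c
          exact (Finset.sum_filter_add_sum_filter_not univ _ _).symm
        -- prefix values
        have hprefix : ∀ c : Fin n,
            ∑ h ∈ univ.filter (fun h : Fin m => h ≤ j), marg M w h c * w a h
            = (∑ h ∈ univ.filter (fun h : Fin m => h < j), (1 / (n : ℝ)) * u a h)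
              + marg M u j c * u a j := by
          intro c
          have hset : univ.filter (fun h : Fin m => h ≤ j)
              = insert j (univ.filter (fun h : Fin m => h < j)) := by
            ext h
            simp [le_iff_lt_or_eq, or_comm]
          rw [hset, Finset.sum_insert (by simp)]
          rw [add_comm]
          congr 1
          · refine Finset.sum_congr rfl fun h hh => ?_
            have hh' : h < j := by simpa using hh
            rw [hmargw h hh'.le c, if_neg hh'.ne, ← hagree a h hh'.le]
          · rw [hmargw j le_rfl c, if_pos rfl, ← hagree a j le_rfl]
        -- tail bounds
        have htail_lo : ∀ c : Fin n,
            0 ≤ ∑ h ∈ univ.filter (fun h : Fin m => ¬ h ≤ j), marg M w h c * w a h :=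
          fun c => Finset.sum_nonneg fun h _ =>
            mul_nonneg (marg_nonneg M w h c) (hwpos a h).le
        have htail_hi : ∀ c : Fin n,
            ∑ h ∈ univ.filter (fun h : Fin m => ¬ h ≤ j), marg M w h c * w a h ≤ ε * m := by
          intro c
          have hb : ∀ h ∈ univ.filter (fun h : Fin m => ¬ h ≤ j),
              marg M w h c * w a h ≤ ε := by
            intro h hh
            have hh' : ¬ h ≤ j := by simpa using hh
            have : w a h = ε := by simp [w, hh']
            rw [this]
            calc marg M w h c * ε ≤ 1 * ε := by
                  exact mul_le_mul_of_nonneg_right (marg_le_one M w h c) hε.le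
              _ = ε := one_mul ε
          calc ∑ h ∈ univ.filter (fun h : Fin m => ¬ h ≤ j), marg M w h c * w a h
              ≤ (univ.filter (fun h : Fin m => ¬ h ≤ j)).card • ε :=
                Finset.sum_le_card_nsmul _ _ _ hb
            _ = ((univ.filter (fun h : Fin m => ¬ h ≤ j)).card : ℝ) * ε := by
                rw [nsmul_eq_mul]
            _ ≤ (m : ℝ) * ε := by
                apply mul_le_mul_of_nonneg_right _ hε.le
                exact_mod_cast (Finset.card_filter_le _ _).trans_eq (by simp)
            _ = ε * m := mul_comm _ _
        rw [hsplit a, hsplit b, hprefix a, hprefix b] at hEFA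
        nlinarith [htail_lo b, htail_hi a]
      -- pass to limit ε → 0
      have hmul : marg M u j b * u a j ≤ marg M u j a * u a j := by
        by_cases hm : (m : ℝ) = 0
        · have := hkey 1 one_pos
          rw [hm] at this; linarith
        · have hm' : (0 : ℝ) < m := lt_of_le_of_ne (Nat.cast_nonneg m) (Ne.symm hm)
          refine le_of_forall_pos_le_add fun ε hε => ?_
          have := hkey (ε / m) (div_pos hε hm')
          rw [div_mul_cancel₀ _ (ne_of_gt hm')] at this
          exact this
      exact le_of_mul_le_mul_right hmul (hu a j)
    -- Step B : all margins equal, summing to 1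
    have hall : ∀ c : Fin n, marg M u j c = marg M u j i :=
      fun c => le_antisymm (stepA i c) (stepA c i)
    have hsum : ∑ c : Fin n, marg M u j c = 1 :=
      sum_marg M u j (fun π hπ => halloc n m u π hπ j ⟨i, hu i j⟩)
    have : (n : ℝ) * marg M u j i = 1 := by
      rw [← hsum, Finset.sum_congr rfl (fun c _ => hall c)]
      simp [mul_comm]
    have hn : (n : ℝ) ≠ 0 := by
      have : 0 < n := Fin.pos i
      positivity
    field_simp at this ⊢
    linarith

/-- With strictly positive utilities, a mechanism (even a wasteful
one, as long as it never discards a liked item) is envy-free ex ante iff it is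
ex ante equivalent to the Like mechanism, i.e. iff every item is allocated with
probability `1/n` to each of the `n` agents. -/
theorem stmt6 (M : OnlineMech)
    (halloc : ∀ (n m : ℕ) (v : Bids n m) (π : Alloc n m), 0 < M.d n m v π →
      ∀ j : Fin m, (∃ i, 0 < v i j) → π j ≠ none) :
    (∀ (n m : ℕ) (u : Bids n m), (∀ i j, 0 < u i j) →
        ∀ i k : Fin n, ∑ h, marg M u h k * u i h ≤ ∑ h, marg M u h i * u i h)
    ↔ (∀ (n m : ℕ) (u : Bids n m), (∀ i j, 0 < u i j) →
        ∀ (i : Fin n) (j : Fin m), marg M u j i = 1 / (n : ℝ)) := by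
  constructor
  · intro efa n m u hu i j
    exact key_marg M halloc efa (j : ℕ) n m u hu j rfl i
  · intro hlike n m u hu i k
    have h1 : ∀ h : Fin m, marg M u h k = marg M u h i := by
      intro h
      rw [hlike n m u hu k h, hlike n m u hu i h]
    exact le_of_eq (Finset.sum_congr rfl fun h _ => by rw [h1 h])
end
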